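/- arXiv:2206.06955 — 4 statements merged into one kernel-verified Lean document; each statement's English description precedes it below -/
import Mathlib

section
/- Let M be a smooth closed connected manifold (compact, without boundary) of dimension n ≥ 1, and let F ⊆ M be a nonempty finite subset. Then there exists a smooth (C^∞) function f : M → ℝ whose values all lie in [0,1], which attains the value 1, such that f⁻¹(0) = F, and such that every critical point x of f satisfies f(x) = 0 or f(x) = 1. -/
open Set Function intervalIntegral
open scoped ContDiff Manifold Topology

/-!
Around each point `p` of `F` take a chart and a small Euclidean ball of radius `r` in it, and put
`reebStep (‖x - p‖² / r²)` there, extended by `1`. This is smooth, vanishes only at `p`, and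
wherever its value lies strictly between `0` and `1` its gradient is a positive multiple of
`x - p`. If the points of `F` are separated by disjoint open sets containing these balls, the
product of the local functions agrees near every point with a single factor, so it is again a Reeb
function; its zero set is `F`, and it equals `1` on the boundary sphere of each ball, which is
nonempty as `dim M ≥ 1`.
-/

noncomputable def reebBump (t : ℝ) : ℝ := expNegInvGlue t * expNegInvGlue (1 - t)

lemma reebBump_nonneg (t : ℝ) : 0 ≤ reebBump t :=
  mul_nonneg (expNegInvGlue.nonneg t) (expNegInvGlue.nonneg _)

lemma reebBump_pos {t : ℝ} (h0 : 0 < t) (h1 : t < 1) : 0 < reebBump t :=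
  mul_pos (expNegInvGlue.pos_of_pos h0) (expNegInvGlue.pos_of_pos (by linarith))

lemma reebBump_eq_zero_of_nonpos {t : ℝ} (h : t ≤ 0) : reebBump t = 0 := by
  simp [reebBump, expNegInvGlue.zero_of_nonpos h]

lemma reebBump_eq_zero_of_one_le {t : ℝ} (h : 1 ≤ t) : reebBump t = 0 := by
  simp [reebBump, expNegInvGlue.zero_of_nonpos (sub_nonpos.2 h)]

lemma contDiff_reebBump : ContDiff ℝ ∞ reebBump :=
  expNegInvGlue.contDiff.mul (expNegInvGlue.contDiff.comp (contDiff_const.sub contDiff_id))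

lemma continuous_reebBump : Continuous reebBump := contDiff_reebBump.continuous

lemma integral_reebBump_pos : 0 < ∫ s in (0 : ℝ)..1, reebBump s :=
  intervalIntegral_pos_of_pos_on (continuous_reebBump.intervalIntegrable 0 1)
    (fun _ hs => reebBump_pos hs.1 hs.2) one_pos

/-- Used instead of `Real.smoothTransition` because its derivative, a positive multiple of
`reebBump`, is explicit and vanishes nowhere on `(0, 1)`. -/
noncomputable def reebStep (t : ℝ) : ℝ :=
  (∫ s in (0 : ℝ)..t, reebBump s) / ∫ s in (0 : ℝ)..1, reebBump s

lemma hasDerivAt_reebStep (t : ℝ) :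
    HasDerivAt reebStep (reebBump t / ∫ s in (0 : ℝ)..1, reebBump s) t :=
  (continuous_reebBump.integral_hasStrictDerivAt 0 t).hasDerivAt.div_const _

lemma contDiff_reebStep : ContDiff ℝ ∞ reebStep := by
  rw [contDiff_infty_iff_deriv]
  refine ⟨fun t => (hasDerivAt_reebStep t).differentiableAt, ?_⟩
  rw [show deriv reebStep = _ from funext fun t => (hasDerivAt_reebStep t).deriv]
  exact contDiff_reebBump.div_const _

lemma monotone_reebStep : Monotone reebStep :=
  monotone_of_deriv_nonneg (fun t => (hasDerivAt_reebStep t).differentiableAt) fun t => by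
    rw [(hasDerivAt_reebStep t).deriv]
    exact div_nonneg (reebBump_nonneg t) integral_reebBump_pos.le

lemma reebStep_of_nonpos {t : ℝ} (h : t ≤ 0) : reebStep t = 0 := by
  have hzero : ∫ s in (0 : ℝ)..t, reebBump s = 0 := by
    rw [integral_congr (g := fun _ => 0) fun s hs => reebBump_eq_zero_of_nonpos ?_, integral_zero]
    exact (uIcc_of_ge h ▸ hs).2
  rw [reebStep, hzero, zero_div]

lemma reebStep_of_one_le {t : ℝ} (h : 1 ≤ t) : reebStep t = 1 := by
  have hzero : ∫ s in (1 : ℝ)..t, reebBump s = 0 := by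
    rw [integral_congr (g := fun _ => 0) fun s hs => reebBump_eq_zero_of_one_le ?_, integral_zero]
    exact (uIcc_of_le h ▸ hs).1
  rw [reebStep, ← integral_add_adjacent_intervals (continuous_reebBump.intervalIntegrable 0 1)
    (continuous_reebBump.intervalIntegrable 1 t), hzero, add_zero,
    div_self integral_reebBump_pos.ne']

lemma reebStep_mem_Icc (t : ℝ) : reebStep t ∈ Icc 0 1 :=
  ⟨(reebStep_of_nonpos (min_le_right t 0)).symm.trans_le (monotone_reebStep (min_le_left t 0)),
    (monotone_reebStep (le_max_left t 1)).trans_eq (reebStep_of_one_le (le_max_right t 1))⟩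

lemma reebStep_eq_zero_iff {t : ℝ} : reebStep t = 0 ↔ t ≤ 0 := by
  refine ⟨fun h => not_lt.1 fun ht => ?_, reebStep_of_nonpos⟩
  have hmin : 0 < reebStep (min t 1) :=
    div_pos (intervalIntegral_pos_of_pos_on (continuous_reebBump.intervalIntegrable _ _)
      (fun s hs => reebBump_pos hs.1 (hs.2.trans_le (min_le_right t 1))) (lt_min ht one_pos))
      integral_reebBump_pos
  exact (hmin.trans_le (monotone_reebStep (min_le_left t 1))).ne' h

section Bowl

variable {V : Type*} [NormedAddCommGroup V]

noncomputable def reebBowl (a : V) (r : ℝ) (v : V) : ℝ := reebStep (‖v - a‖ ^ 2 / r ^ 2)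

lemma contDiff_reebBowl [InnerProductSpace ℝ V] (a : V) (r : ℝ) : ContDiff ℝ ∞ (reebBowl a r) :=
  contDiff_reebStep.comp (((contDiff_id.sub contDiff_const).norm_sq ℝ).div_const _)

lemma reebBowl_mem_Icc (a : V) (r : ℝ) (v : V) : reebBowl a r v ∈ Icc 0 1 :=
  reebStep_mem_Icc _

lemma reebBowl_eq_zero_iff {a v : V} {r : ℝ} (hr : r ≠ 0) : reebBowl a r v = 0 ↔ v = a := by
  rw [reebBowl, reebStep_eq_zero_iff, div_le_iff₀ (by positivity), zero_mul, ← sub_eq_zero,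
    ← norm_eq_zero]
  exact ⟨fun h => pow_eq_zero_iff two_ne_zero |>.1 (le_antisymm h (by positivity)),
    fun h => by simp [h]⟩

lemma reebBowl_of_le {a v : V} {r : ℝ} (hr : 0 < r) (h : r ≤ ‖v - a‖) : reebBowl a r v = 1 :=
  reebStep_of_one_le <| (one_le_div (by positivity)).2 <| pow_le_pow_left₀ hr.le h 2

lemma reebBowl_eq_zero_or_one_of_fderiv_eq_zero [InnerProductSpace ℝ V] {a v : V} {r : ℝ}
    (h : fderiv ℝ (reebBowl a r) v = 0) : reebBowl a r v = 0 ∨ reebBowl a r v = 1 := by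
  set t := ‖v - a‖ ^ 2 / r ^ 2 with ht
  rcases le_or_gt t 0 with ht0 | ht0
  · exact .inl (reebStep_of_nonpos ht0)
  rcases le_or_gt 1 t with ht1 | ht1
  · exact .inr (reebStep_of_one_le ht1)
  have hderiv := (hasDerivAt_reebStep t).comp_hasFDerivAt v
    (((hasFDerivAt_id v).sub_const a).norm_sq.mul_const (r ^ 2)⁻¹)
  rw [show fderiv ℝ (reebBowl a r) v = _ from hderiv.fderiv] at h
  have hradial : (reebBump t / ∫ s in (0 : ℝ)..1, reebBump s) * (2 * t) = 0 := by
    have h' := DFunLike.congr_fun h (v - a)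
    simp only [smul_apply, ContinuousLinearMap.comp_apply, innerSL_apply_apply,
      ContinuousLinearMap.id_apply, id, real_inner_self_eq_norm_sq, smul_eq_mul,
      zero_apply] at h'
    rw [ht]; linear_combination h'
  exact absurd hradial
    (mul_pos (div_pos (reebBump_pos ht0 ht1) integral_reebBump_pos) (by positivity)).ne'

end Bowl

lemma ContinuousLinearMap.eq_zero_of_comp_eq_zero_of_isInvertible {R E F G : Type*} [Semiring R]
    [AddCommMonoid E] [Module R E] [TopologicalSpace E] [AddCommMonoid F] [Module R F]
    [TopologicalSpace F] [AddCommMonoid G] [Module R G] [TopologicalSpace G]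
    {D : F →L[R] G} {T : E →L[R] F}
    (hT : T.IsInvertible) (h : D.comp T = 0) : D = 0 := by
  obtain ⟨e, rfl⟩ := hT
  ext v
  simpa using DFunLike.congr_fun h (e.symm v)

lemma Finset.prod_eqOn_of_mulSupport_subset {α β ι : Type*} [CommMonoid β] {s : Finset ι}
    {g : ι → α → β} {U : ι → Set α} (hsupp : ∀ i ∈ s, mulSupport (g i) ⊆ U i)
    (hdisj : (s : Set ι).PairwiseDisjoint U) {i : ι} (hi : i ∈ s) :
    EqOn (∏ j ∈ s, g j) (g i) (U i) := by
  intro x hx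
  rw [Finset.prod_apply]
  refine Finset.prod_eq_single_of_mem i hi fun j hj hji => notMem_mulSupport.1 fun hxj => ?_
  exact Set.disjoint_left.1 (hdisj hj hi hji) (hsupp j hj hxj) hx

lemma Euclidean.exists_dist_eq {E : Type*} [NormedAddCommGroup E] [NormedSpace ℝ E]
    [FiniteDimensional ℝ E] [Nontrivial E] (a : E) {r : ℝ} (hr : 0 ≤ r) :
    ∃ z, Euclidean.dist z a = r := by
  have : Nontrivial (EuclideanSpace ℝ (Fin (Module.finrank ℝ E))) :=
    toEuclidean.symm.toEquiv.nontrivial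
  obtain ⟨w, hw⟩ := exists_norm_eq (EuclideanSpace ℝ (Fin (Module.finrank ℝ E))) hr
  exact ⟨toEuclidean.symm (w + toEuclidean a), by simp [Euclidean.dist, dist_eq_norm, hw]⟩

section Manifold

variable {E : Type*} [NormedAddCommGroup E] [NormedSpace ℝ E]
  {H : Type*} [TopologicalSpace H] {I : ModelWithCorners ℝ E H}
  {M : Type*} [TopologicalSpace M] [ChartedSpace H M]

structure IsReebFunction (I : ModelWithCorners ℝ E H) (f : M → ℝ) : Prop where
  contMDiff : ContMDiff I 𝓘(ℝ) ∞ f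
  mem_Icc : ∀ x, f x ∈ Icc (0 : ℝ) 1
  eq_zero_or_one_of_mfderiv_eq_zero : ∀ x, mfderiv I 𝓘(ℝ) f x = 0 → f x = 0 ∨ f x = 1

lemma mulSupport_mulIndicator_extChartAt_subset {p : M} {h : E → ℝ} {K : Set E}
    (h1 : ∀ z ∉ K, h z = 1) :
    mulSupport ((extChartAt I p).source.mulIndicator (h ∘ extChartAt I p)) ⊆
      (extChartAt I p).symm '' K := by
  intro x hx
  obtain ⟨hxs, hx1⟩ : x ∈ (extChartAt I p).source ∧ h (extChartAt I p x) ≠ 1 := by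
    simpa [mulIndicator_apply_ne_one] using hx
  exact ⟨extChartAt I p x, not_not.1 (mt (h1 _) hx1), (extChartAt I p).left_inv hxs⟩

lemma contMDiff_mulIndicator_extChartAt [IsManifold I ∞ M] [T2Space M] {p : M} {h : E → ℝ}
    (hh : ContDiff ℝ ∞ h) {K : Set E} (hK : IsCompact K) (hKt : K ⊆ (extChartAt I p).target)
    (h1 : ∀ z ∉ K, h z = 1) :
    ContMDiff I 𝓘(ℝ) ∞ ((extChartAt I p).source.mulIndicator (h ∘ extChartAt I p)) := by
  set ψ := extChartAt I p
  have hsupp : mulTSupport (ψ.source.mulIndicator (h ∘ ψ)) ⊆ ψ.symm '' K :=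
    closure_minimal (mulSupport_mulIndicator_extChartAt_subset h1)
      (hK.image_of_continuousOn ((continuousOn_extChartAt_symm p).mono hKt)).isClosed
  refine contMDiff_of_mulTSupport fun x hx => ?_
  obtain ⟨z, hz, rfl⟩ := hsupp hx
  have hxs : ψ.symm z ∈ ψ.source := ψ.map_target (hKt hz)
  refine (hh.contDiffAt.contMDiffAt.comp _ (contMDiffAt_extChartAt' ?_)).congr_of_eventuallyEq
    (eqOn_mulIndicator.eventuallyEq_of_mem ((isOpen_extChartAt_source p).mem_nhds hxs))
  rwa [← extChartAt_source I]

lemma fderiv_eq_zero_of_mfderiv_mulIndicator_extChartAt_eq_zero [IsManifold I 1 M] {p x : M}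
    {h : E → ℝ} (hx : x ∈ (extChartAt I p).source)
    (hh : DifferentiableAt ℝ h (extChartAt I p x))
    (hcrit : mfderiv I 𝓘(ℝ) ((extChartAt I p).source.mulIndicator (h ∘ extChartAt I p)) x = 0) :
    fderiv ℝ h (extChartAt I p x) = 0 := by
  have heq : (extChartAt I p).source.mulIndicator (h ∘ extChartAt I p) =ᶠ[𝓝 x]
      h ∘ extChartAt I p :=
    eqOn_mulIndicator.eventuallyEq_of_mem ((isOpen_extChartAt_source p).mem_nhds hx)
  have hchart := (mdifferentiableAt_extChartAt (I := I) (x := p)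
    (by rwa [← extChartAt_source I])).hasMFDerivAt
  rw [heq.mfderiv_eq, (hh.hasFDerivAt.hasMFDerivAt.comp x hchart).mfderiv] at hcrit
  exact ContinuousLinearMap.eq_zero_of_comp_eq_zero_of_isInvertible
    (isInvertible_mfderiv_extChartAt hx) hcrit

theorem isReebFunction_mulIndicator_extChartAt [IsManifold I ∞ M] [T2Space M] {p : M}
    {h : E → ℝ} (hh : ContDiff ℝ ∞ h) (hIcc : ∀ z, h z ∈ Icc (0 : ℝ) 1)
    (hcrit : ∀ z, fderiv ℝ h z = 0 → h z = 0 ∨ h z = 1) {K : Set E} (hK : IsCompact K)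
    (hKt : K ⊆ (extChartAt I p).target) (h1 : ∀ z ∉ K, h z = 1) :
    IsReebFunction I ((extChartAt I p).source.mulIndicator (h ∘ extChartAt I p)) where
  contMDiff := contMDiff_mulIndicator_extChartAt hh hK hKt h1
  mem_Icc x := by
    by_cases hx : x ∈ (extChartAt I p).source
    · rw [mulIndicator_of_mem hx]; exact hIcc _
    · rw [mulIndicator_of_notMem hx]; exact ⟨zero_le_one, le_rfl⟩
  eq_zero_or_one_of_mfderiv_eq_zero x hx := by
    by_cases hxs : x ∈ (extChartAt I p).source
    · rw [mulIndicator_of_mem hxs]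
      exact hcrit _ (fderiv_eq_zero_of_mfderiv_mulIndicator_extChartAt_eq_zero hxs
        (hh.differentiable (by simp)).differentiableAt hx)
    · exact .inr (mulIndicator_of_notMem hxs _)

theorem exists_isReebFunction_preimage_zero_eq_singleton [FiniteDimensional ℝ E] [Nontrivial E]
    [I.Boundaryless] [IsManifold I ∞ M] [T2Space M] (p : M) {U : Set M} (hU : U ∈ 𝓝 p) :
    ∃ g : M → ℝ, IsReebFunction I g ∧ g ⁻¹' {0} = {p} ∧ mulSupport g ⊆ U ∧ ∃ x ∈ U, g x = 1 := by
  set ψ := extChartAt I p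
  have hN : ψ.target ∩ ψ.symm ⁻¹' U ∈ 𝓝 (ψ p) :=
    Filter.inter_mem (extChartAt_target_mem_nhds p)
      ((continuousAt_extChartAt_symm p).preimage_mem_nhds (by rwa [extChartAt_to_inv]))
  obtain ⟨r, hr, hrN⟩ := Euclidean.nhds_basis_closedBall.mem_iff.1 hN
  set h : E → ℝ := fun z => reebBowl (toEuclidean (ψ p)) r (toEuclidean z)
  have h1 : ∀ z ∉ Euclidean.closedBall (ψ p) r, h z = 1 := fun z hz =>
    reebBowl_of_le hr (dist_eq_norm (toEuclidean z) _ ▸ (not_le.1 hz).le)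
  have hcrit : ∀ z, fderiv ℝ h z = 0 → h z = 0 ∨ h z = 1 := fun z hz =>
    reebBowl_eq_zero_or_one_of_fderiv_eq_zero <|
      ContinuousLinearMap.eq_zero_of_comp_eq_zero_of_isInvertible ⟨toEuclidean, rfl⟩ <| by
        rwa [← ContinuousLinearEquiv.comp_right_fderiv]
  refine ⟨ψ.source.mulIndicator (h ∘ ψ), isReebFunction_mulIndicator_extChartAt
    ((contDiff_reebBowl _ r).comp toEuclidean.contDiff) (fun z => reebBowl_mem_Icc _ r _) hcrit
    Euclidean.isCompact_closedBall (fun z hz => (hrN hz).1) h1, ?_, ?_, ?_⟩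
  · ext x
    by_cases hxs : x ∈ ψ.source
    · rw [mem_preimage, mulIndicator_of_mem hxs, comp_apply, mem_singleton_iff,
        reebBowl_eq_zero_iff hr.ne', toEuclidean.injective.eq_iff]
      exact ψ.injOn.eq_iff hxs (mem_extChartAt_source p)
    · rw [mem_preimage, mulIndicator_of_notMem hxs]
      exact iff_of_false one_ne_zero fun hxp => hxs (hxp ▸ mem_extChartAt_source p)
  · rintro _ hx
    obtain ⟨z, hz, rfl⟩ := mulSupport_mulIndicator_extChartAt_subset h1 hx
    exact (hrN hz).2
  · obtain ⟨z, hz⟩ := Euclidean.exists_dist_eq (ψ p) hr.le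
    have hzN := hrN hz.le
    refine ⟨ψ.symm z, hzN.2, ?_⟩
    rw [mulIndicator_of_mem (ψ.map_target hzN.1), comp_apply, ψ.right_inv hzN.1]
    exact reebBowl_of_le hr (dist_eq_norm (toEuclidean z) _ ▸ hz.ge)

theorem IsReebFunction.finset_prod {ι : Type*} {s : Finset ι} {g : ι → M → ℝ} {U : ι → Set M}
    (hg : ∀ i ∈ s, IsReebFunction I (g i)) (hU : ∀ i ∈ s, IsOpen (U i))
    (hsupp : ∀ i ∈ s, mulSupport (g i) ⊆ U i) (hdisj : (s : Set ι).PairwiseDisjoint U) :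
    IsReebFunction I (∏ i ∈ s, g i) where
  contMDiff := contMDiff_finsetProd' fun i hi => (hg i hi).contMDiff
  mem_Icc x := by
    rw [Finset.prod_apply]
    exact ⟨Finset.prod_nonneg fun i hi => ((hg i hi).mem_Icc x).1,
      Finset.prod_le_one (fun i hi => ((hg i hi).mem_Icc x).1) fun i hi => ((hg i hi).mem_Icc x).2⟩
  eq_zero_or_one_of_mfderiv_eq_zero x hx := by
    by_cases hxU : ∃ i ∈ s, x ∈ U i
    · obtain ⟨i, hi, hxi⟩ := hxU
      have heq := (Finset.prod_eqOn_of_mulSupport_subset hsupp hdisj hi).eventuallyEq_of_mem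
        ((hU i hi).mem_nhds hxi)
      rw [heq.mfderiv_eq] at hx
      rw [heq.eq_of_nhds]
      exact (hg i hi).eq_zero_or_one_of_mfderiv_eq_zero x hx
    · push Not at hxU
      refine .inr ?_
      rw [Finset.prod_apply]
      exact Finset.prod_eq_one fun i hi => notMem_mulSupport.1 fun hxi => hxU i hi (hsupp i hi hxi)

end Manifold

theorem stmt_1_general
    {E : Type*} [NormedAddCommGroup E] [NormedSpace ℝ E] [FiniteDimensional ℝ E]
    {H : Type*} [TopologicalSpace H] (I : ModelWithCorners ℝ E H) [I.Boundaryless]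
    (M : Type*) [TopologicalSpace M] [ChartedSpace H M] [IsManifold I (⊤ : ℕ∞) M]
    [T2Space M]
    (hdim : 1 ≤ Module.finrank ℝ E)
    (F : Set M) (hFne : F.Nonempty) (hFfin : F.Finite) :
    ∃ f : M → ℝ,
      ContMDiff I 𝓘(ℝ) (⊤ : ℕ∞) f ∧
      (∀ x, f x ∈ Set.Icc (0 : ℝ) 1) ∧
      (∃ x, f x = 1) ∧
      f ⁻¹' {0} = F ∧
      (∀ x, mfderiv I 𝓘(ℝ) f x = 0 → f x = 0 ∨ f x = 1) := by
  have : Nontrivial E := Module.finrank_pos_iff.1 hdim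
  obtain ⟨U, hU, hdisj⟩ := hFfin.t2_separation
  rw [← hFfin.coe_toFinset] at hdisj
  choose g hg hg0 hgU hg1 using fun p =>
    exists_isReebFunction_preimage_zero_eq_singleton (I := I) p ((hU p).2.mem_nhds (hU p).1)
  have hreeb := IsReebFunction.finset_prod (s := hFfin.toFinset) (fun p _ => hg p)
    (fun p _ => (hU p).2) (fun p _ => hgU p) hdisj
  refine ⟨∏ p ∈ hFfin.toFinset, g p, hreeb.contMDiff, hreeb.mem_Icc, ?_, ?_,
    hreeb.eq_zero_or_one_of_mfderiv_eq_zero⟩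
  · obtain ⟨p, hp⟩ := hFne
    obtain ⟨x, hxU, hx1⟩ := hg1 p
    exact ⟨x, (Finset.prod_eqOn_of_mulSupport_subset (fun p _ => hgU p) hdisj
      (hFfin.mem_toFinset.2 hp) hxU).trans hx1⟩
  · ext x
    have hzero (p : M) : g p x = 0 ↔ x = p := Set.ext_iff.1 (hg0 p) x
    simp [Finset.prod_apply, Finset.prod_eq_zero_iff, hzero]

/-- On a smooth closed connected manifold of dimension `n ≥ 1`, for every nonempty finite
subset `F`, there is a Reeb function `f : M → [0,1]` attaining the value `1`, with
`f⁻¹(0) = F`, whose only critical values are `0` and `1`. -/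
theorem stmt_1
    {E : Type*} [NormedAddCommGroup E] [NormedSpace ℝ E] [FiniteDimensional ℝ E]
    {H : Type*} [TopologicalSpace H] (I : ModelWithCorners ℝ E H) [I.Boundaryless]
    (M : Type*) [TopologicalSpace M] [ChartedSpace H M] [IsManifold I (⊤ : ℕ∞) M]
    [T2Space M] [CompactSpace M] [ConnectedSpace M]
    (hdim : 1 ≤ Module.finrank ℝ E)
    (F : Set M) (hFne : F.Nonempty) (hFfin : F.Finite) :
    ∃ f : M → ℝ,
      ContMDiff I 𝓘(ℝ) (⊤ : ℕ∞) f ∧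
      (∀ x, f x ∈ Set.Icc (0 : ℝ) 1) ∧
      (∃ x, f x = 1) ∧
      f ⁻¹' {0} = F ∧
      (∀ x, mfderiv I 𝓘(ℝ) f x = 0 → f x = 0 ∨ f x = 1) :=
  stmt_1_general I M hdim F hFne hFfin
end

section
/- Let E be a real normed vector space. For every k ∈ ℕ there exists a constant C > 0 such that for every C^∞ function β : E → ℝ, every C^∞ function γ : ℝ → ℝ, and every point p ∈ E, one has ‖D^k(γ ∘ β)(p)‖ ≤ C · (∑_{j=0}^{k} |γ^{(j)}(β(p))|) · (max(1, ∑_{j=0}^{k} ‖D^j β(p)‖))^k, where D^j denotes the j-th iterated Fréchet derivative (iteratedFDeriv) and γ^{(j)} the j-th iterated derivative. -/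
/-- Jet estimate from Faà di Bruno's formula: for every `k` there is a constant `C > 0`
such that for all smooth `β : E → ℝ`, smooth `γ : ℝ → ℝ` and every point `p`,
`‖D^k (γ ∘ β) (p)‖ ≤ C ⬝ (∑_{j ≤ k} |γ⁽ʲ⁾(β p)|) ⬝ (max 1 (∑_{j ≤ k} ‖D^j β (p)‖))^k`. -/
theorem stmt_4
    {E : Type*} [NormedAddCommGroup E] [NormedSpace ℝ E] (k : ℕ) :
    ∃ C : ℝ, 0 < C ∧
      ∀ (β : E → ℝ) (γ : ℝ → ℝ), ContDiff ℝ (⊤ : ℕ∞) β → ContDiff ℝ (⊤ : ℕ∞) γ → ∀ p : E,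
        ‖iteratedFDeriv ℝ k (γ ∘ β) p‖ ≤
          C * (∑ j ∈ Finset.range (k + 1), |iteratedDeriv j γ (β p)|) *
            (max 1 (∑ j ∈ Finset.range (k + 1), ‖iteratedFDeriv ℝ j β p‖)) ^ k := by
  refine ⟨((Nat.factorial k : ℕ) : ℝ), by positivity, fun β γ hβ hγ p => ?_⟩
  set D : ℝ := max 1 (∑ j ∈ Finset.range (k + 1), ‖iteratedFDeriv ℝ j β p‖) with hD
  have hD1 : (1 : ℝ) ≤ D := le_max_left _ _
  refine norm_iteratedFDeriv_comp_le hγ hβ (by exact_mod_cast le_top) p (fun i hi => ?_) (fun i h1 hi => ?_)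
  · calc ‖iteratedFDeriv ℝ i γ (β p)‖ = |iteratedDeriv i γ (β p)| := by
          rw [norm_iteratedFDeriv_eq_norm_iteratedDeriv]; rfl
      _ ≤ _ := Finset.single_le_sum (f := fun j => |iteratedDeriv j γ (β p)|)
          (fun j _ => abs_nonneg _) (Finset.mem_range.2 (Nat.lt_succ_of_le hi))
  · calc ‖iteratedFDeriv ℝ i β p‖
        ≤ ∑ j ∈ Finset.range (k + 1), ‖iteratedFDeriv ℝ j β p‖ :=
          Finset.single_le_sum (f := fun j => ‖iteratedFDeriv ℝ j β p‖)
            (fun j _ => norm_nonneg _) (Finset.mem_range.2 (Nat.lt_succ_of_le hi))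
      _ ≤ D := le_max_right _ _
      _ ≤ D ^ i := le_self_pow₀ (by linarith) (by omega)
end

section
/- Let M be a smooth closed manifold (compact, without boundary) and let f : M → ℝ be a smooth function with 0 ≤ f(x) ≤ 1 for all x ∈ M and such that every critical point x of f satisfies f(x) = 0 or f(x) = 1. Let a ∈ (0,1). Then for every point x with f(x) ≤ a, the connected component of x in the sublevel set {y ∈ M | f(y) ≤ a} contains a point z with f(z) = 0. -/
/-!
Let `z` minimise `f` on the (compact) component `C` of `x` in `{f ≤ a}`. If `df_z ≠ 0`, then
in a chart `f` strictly decreases along a short segment starting at `z`; the image of that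
segment is a connected subset of `{f ≤ f z} ⊆ {f ≤ a}` through `z`, hence lies in `C`, and
contradicts the minimality of `z`. So `z` is critical, and `f z ≤ a < 1` forces `f z = 0`.
-/

open Manifold Filter Topology Set

theorem IsClosed.isClosed_connectedComponentIn {X : Type*} [TopologicalSpace X] {S : Set X}
    (hS : IsClosed S) (x : X) : IsClosed (connectedComponentIn S x) := by
  refine isClosed_of_closure_subset fun y hy => ?_
  have hxS : x ∈ S := by
    by_contra hx
    simp [connectedComponentIn_eq_empty hx] at hy
  exact isPreconnected_connectedComponentIn.closure.subset_connectedComponentIn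
    (subset_closure (mem_connectedComponentIn hxS))
    (closure_minimal (connectedComponentIn_subset S x) hS) hy

theorem HasDerivAt.eventually_nhdsGT_lt {h : ℝ → ℝ} {h' x : ℝ} (hh : HasDerivAt h h' x)
    (hneg : h' < 0) : ∀ᶠ t in 𝓝[>] x, h t < h x := by
  have hslope : Tendsto (slope h x) (𝓝[>] x) (𝓝 h') :=
    (hasDerivWithinAt_iff_tendsto_slope' (lt_irrefl x)).mp hh.hasDerivWithinAt
  filter_upwards [hslope.eventually_lt_const hneg, self_mem_nhdsWithin] with t ht hxt
  exact (slope_neg_iff_of_le hxt.le).mp ht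

theorem HasFDerivAt.exists_eventually_nhdsGT_lt {E : Type*} [NormedAddCommGroup E]
    [NormedSpace ℝ E] {F : E → ℝ} {L : E →L[ℝ] ℝ} {p : E} (hF : HasFDerivAt F L p) (hL : L ≠ 0) :
    ∃ v : E, ∀ᶠ t in 𝓝[>] (0 : ℝ), F (p + t • v) < F p := by
  obtain ⟨u, hu⟩ : ∃ u, L u ≠ 0 := by
    by_contra! h
    exact hL (ContinuousLinearMap.ext h)
  have hline : HasDerivAt (fun t : ℝ => p + t • (-(L u) • u)) (-(L u) • u) 0 := by
    simpa using ((hasDerivAt_id (0 : ℝ)).smul_const (-(L u) • u)).const_add p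
  have hdesc : L (-(L u) • u) < 0 := by
    simpa [map_smul, smul_eq_mul, ← sq] using pow_pos (abs_pos.2 hu) 2
  refine ⟨-(L u) • u, ?_⟩
  simpa using ((hF.comp_hasDerivAt_of_eq 0 hline (by simp)).eventually_nhdsGT_lt hdesc)

section
variable {E : Type*} [NormedAddCommGroup E] [NormedSpace ℝ E]
    {H : Type*} [TopologicalSpace H] {I : ModelWithCorners ℝ E H} [I.Boundaryless]
    {M : Type*} [TopologicalSpace M] [ChartedSpace H M]

theorem MDifferentiableAt.hasFDerivAt_writtenInExtChartAt {f : M → ℝ} {z : M}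
    (hf : MDifferentiableAt I 𝓘(ℝ) f z) :
    HasFDerivAt (f ∘ (extChartAt I z).symm) (mfderiv I 𝓘(ℝ) f z) (extChartAt I z z) := by
  simpa [writtenInExtChartAt, chartAt_self_eq] using
    hf.hasMFDerivAt.2.hasFDerivAt (by simp [I.range_eq_univ])

theorem exists_isPreconnected_sublevel_of_mfderiv_ne_zero {f : M → ℝ} {z : M}
    (hf : MDifferentiableAt I 𝓘(ℝ) f z) (hz : mfderiv I 𝓘(ℝ) f z ≠ 0) :
    ∃ K : Set M, IsPreconnected K ∧ z ∈ K ∧ K ⊆ {y | f y ≤ f z} ∧ ∃ y ∈ K, f y < f z := by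
  set e := extChartAt I z
  obtain ⟨v, hv⟩ := hf.hasFDerivAt_writtenInExtChartAt.exists_eventually_nhdsGT_lt hz
  set c : ℝ → E := fun t => e z + t • v
  have hc : Continuous c := by fun_prop
  have hc0 : c 0 = e z := by simp [c]
  have htarget : ∀ᶠ t in 𝓝 (0 : ℝ), c t ∈ e.target :=
    hc.continuousAt.preimage_mem_nhds (by rw [hc0]; exact extChartAt_target_mem_nhds z)
  obtain ⟨δ, hδ, hδsub⟩ := mem_nhdsGT_iff_exists_Ioc_subset.mp
    (hv.and (nhdsWithin_le_nhds htarget))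
  have hsub : ∀ t ∈ Icc 0 δ, c t ∈ e.target ∧ f (e.symm (c t)) ≤ f z := by
    intro t ht
    rcases ht.1.eq_or_lt with rfl | ht0
    · rw [hc0, extChartAt_to_inv]
      exact ⟨mem_extChartAt_target z, le_rfl⟩
    · obtain ⟨hlt, hmem⟩ := hδsub ⟨ht0, ht.2⟩
      simp only [Function.comp, extChartAt_to_inv] at hlt
      exact ⟨hmem, hlt.le⟩
  refine ⟨(e.symm ∘ c) '' Icc 0 δ, ?_, ⟨0, ⟨le_rfl, hδ.le⟩, by simp [hc0, e]⟩, ?_, ?_⟩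
  · exact isPreconnected_Icc.image _
      ((continuousOn_extChartAt_symm z).comp hc.continuousOn fun t ht => (hsub t ht).1)
  · rintro _ ⟨t, ht, rfl⟩
    exact (hsub t ht).2
  · refine ⟨_, ⟨δ, ⟨hδ.le, le_rfl⟩, rfl⟩, ?_⟩
    simpa [Function.comp, e, c] using (hδsub ⟨hδ, le_rfl⟩).1

theorem IsMinOn.mfderiv_eq_zero_of_mem_connectedComponentIn {f : M → ℝ} {a : ℝ} {x z : M}
    (hmin : IsMinOn f (connectedComponentIn {y | f y ≤ a} x) z)
    (hz : z ∈ connectedComponentIn {y | f y ≤ a} x) (hf : MDifferentiableAt I 𝓘(ℝ) f z) :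
    mfderiv I 𝓘(ℝ) f z = 0 := by
  by_contra hcrit
  obtain ⟨K, hK, hzK, hKsub, y, hyK, hy⟩ :=
    exists_isPreconnected_sublevel_of_mfderiv_ne_zero hf hcrit
  have hza : f z ≤ a := connectedComponentIn_subset {y | f y ≤ a} x hz
  have hKC : K ⊆ connectedComponentIn {y | f y ≤ a} x := by
    rw [connectedComponentIn_eq hz]
    exact hK.subset_connectedComponentIn hzK fun w hw => (hKsub hw).trans hza
  exact (hmin (hKC hyK)).not_gt hy

end

theorem stmt_6_general
    {E : Type*} [NormedAddCommGroup E] [NormedSpace ℝ E]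
    {H : Type*} [TopologicalSpace H] (I : ModelWithCorners ℝ E H) [I.Boundaryless]
    (M : Type*) [TopologicalSpace M] [ChartedSpace H M] [CompactSpace M]
    (f : M → ℝ)
    (hf : ContMDiff I 𝓘(ℝ) (⊤ : ℕ∞) f)
    (hcrit : ∀ x, mfderiv I 𝓘(ℝ) f x = 0 → f x = 0 ∨ f x = 1)
    (a : ℝ) (ha : a ∈ Set.Ioo (0 : ℝ) 1) :
    ∀ x : M, f x ≤ a →
      ∃ z ∈ connectedComponentIn {y : M | f y ≤ a} x, f z = 0 := by
  intro x hx
  have hS : IsClosed {y : M | f y ≤ a} := isClosed_le hf.continuous continuous_const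
  obtain ⟨z, hzC, hzmin⟩ := (hS.isClosed_connectedComponentIn x).isCompact.exists_isMinOn
    ⟨x, mem_connectedComponentIn hx⟩ hf.continuous.continuousOn
  have hz1 : f z < 1 := (connectedComponentIn_subset _ _ hzC).trans_lt ha.2
  have hdf := hzmin.mfderiv_eq_zero_of_mem_connectedComponentIn hzC
    (hf.mdifferentiableAt (by simp))
  exact ⟨z, hzC, (hcrit z hdf).resolve_right hz1.ne⟩

/-- For a Reeb function `f` on a smooth closed manifold and `a ∈ (0,1)`, every connected
component of the sublevel set `{f ≤ a}` contains a point where `f` vanishes. -/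
theorem stmt_6
    {E : Type*} [NormedAddCommGroup E] [NormedSpace ℝ E] [FiniteDimensional ℝ E]
    {H : Type*} [TopologicalSpace H] (I : ModelWithCorners ℝ E H) [I.Boundaryless]
    (M : Type*) [TopologicalSpace M] [ChartedSpace H M] [IsManifold I (⊤ : ℕ∞) M]
    [T2Space M] [CompactSpace M]
    (f : M → ℝ)
    (hf : ContMDiff I 𝓘(ℝ) (⊤ : ℕ∞) f)
    (hrange : ∀ x, f x ∈ Set.Icc (0 : ℝ) 1)
    (hcrit : ∀ x, mfderiv I 𝓘(ℝ) f x = 0 → f x = 0 ∨ f x = 1)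
    (a : ℝ) (ha : a ∈ Set.Ioo (0 : ℝ) 1) :
    ∀ x : M, f x ≤ a →
      ∃ z ∈ connectedComponentIn {y : M | f y ≤ a} x, f z = 0 :=
  stmt_6_general I M f hf hcrit a ha
end

section
/- Let M be a smooth closed manifold (compact, without boundary) and let f : M → ℝ be a smooth function with 0 ≤ f(x) ≤ 1 for all x ∈ M and such that every critical point x of f satisfies f(x) = 0 or f(x) = 1. Assume that the set f⁻¹(0) is nonempty and connected. Then for every a ∈ (0,1), the sublevel set {y ∈ M | f(y) ≤ a} is connected. -/
/-!
Since `f` has no critical points at levels in `(0, 1)`, Fermat's rule says its only local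
minima lie in `f⁻¹(0) ∪ f⁻¹(1)`. On the compact, locally connected manifold `M`, each
connected component of the open set `{f < a}` is open, and `f` attains its minimum over the
closure of the component inside the component, at a local minimum of `f`; that point lies in
the connected set `f⁻¹(0)`, so `{f < a}` is connected. No point of the level `a` is a local
minimum, so `{f ≤ a}` lies in the closure of `{f < a}` and is connected as well.
-/

open Manifold Set Filter Topology

section Topology

variable {X : Type*} [TopologicalSpace X]

theorem isPreconnected_of_forall_connectedComponentIn_meets {S T : Set X}
    (hT : IsPreconnected T) (hTS : T ⊆ S) (hTne : T.Nonempty)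
    (hmeet : ∀ y ∈ S, (connectedComponentIn S y ∩ T).Nonempty) : IsPreconnected S := by
  obtain ⟨t₀, ht₀⟩ := hTne
  refine isPreconnected_of_forall t₀ fun y hy ↦ ?_
  obtain ⟨z, hzC, hzT⟩ := hmeet y hy
  exact ⟨connectedComponentIn S y ∪ T, union_subset (connectedComponentIn_subset _ _) hTS,
    Or.inr ht₀, Or.inl (mem_connectedComponentIn hy),
    isPreconnected_connectedComponentIn.union z hzC hzT hT⟩

theorem exists_isLocalMin_mem_connectedComponentIn_setOf_lt [LocallyConnectedSpace X]
    [CompactSpace X] {f : X → ℝ} (hf : Continuous f) {a : ℝ} {y : X} (hy : f y < a) :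
    ∃ x ∈ connectedComponentIn {z | f z < a} y, IsLocalMin f x := by
  set U := {z | f z < a}
  set V := connectedComponentIn U y
  have hU : IsOpen U := isOpen_lt hf continuous_const
  have hyV : y ∈ V := mem_connectedComponentIn hy
  obtain ⟨x, hx_closure, hxmin⟩ :=
    isClosed_closure.isCompact.exists_isMinOn ⟨y, subset_closure hyV⟩ hf.continuousOn
  have hxU : x ∈ U := (hxmin (subset_closure hyV)).trans_lt hy
  -- the component of `x` is a neighbourhood of `x ∈ closure V`, so it meets `V`
  obtain ⟨w, hwx, hwV⟩ := mem_closure_iff.1 hx_closure _ hU.connectedComponentIn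
    (mem_connectedComponentIn hxU)
  have hVx : V = connectedComponentIn U x :=
    (connectedComponentIn_eq hwV).trans (connectedComponentIn_eq hwx).symm
  have hxV : x ∈ V := hVx ▸ mem_connectedComponentIn hxU
  refine ⟨x, hxV, ?_⟩
  filter_upwards [hU.connectedComponentIn.mem_nhds hxV] with z hz
  exact hxmin (subset_closure hz)

theorem setOf_le_subset_closure_setOf_lt {f : X → ℝ} {a : ℝ}
    (h : ∀ x, f x = a → ¬IsLocalMin f x) : {x | f x ≤ a} ⊆ closure {x | f x < a} := by
  intro x hx
  rcases (show f x ≤ a from hx).lt_or_eq with hlt | heq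
  · exact subset_closure hlt
  · have hnotmin := h x heq
    rw [IsLocalMin, IsMinFilter, not_eventually] at hnotmin
    rw [mem_closure_iff_frequently]
    exact hnotmin.mono fun z hz ↦ heq ▸ not_le.1 hz

end Topology

theorem IsLocalMin.mfderiv_eq_zero
    {E : Type*} [NormedAddCommGroup E] [NormedSpace ℝ E]
    {H : Type*} [TopologicalSpace H] {I : ModelWithCorners ℝ E H} [I.Boundaryless]
    {M : Type*} [TopologicalSpace M] [ChartedSpace H M] {f : M → ℝ} {x : M}
    (h : IsLocalMin f x) : mfderiv I 𝓘(ℝ) f x = 0 := by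
  by_cases hd : MDifferentiableAt I 𝓘(ℝ) f x
  · have hderiv : HasFDerivAt (𝕜 := ℝ) (writtenInExtChartAt I 𝓘(ℝ) x f)
        (mfderiv I 𝓘(ℝ) f x) (extChartAt I x x) :=
      hasFDerivWithinAt_univ.1 (I.range_eq_univ ▸ hd.hasMFDerivAt.2)
    have hloc : IsLocalMin (writtenInExtChartAt I 𝓘(ℝ) x f) (extChartAt I x x) := by
      simpa [writtenInExtChartAt] using
        (extChartAt_to_inv (I := I) x ▸ h).comp_continuous (continuousAt_extChartAt_symm x)
    exact hloc.hasFDerivAt_eq_zero hderiv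
  · exact mfderiv_zero_of_not_mdifferentiableAt hd

theorem stmt_7_general
    {E : Type*} [NormedAddCommGroup E] [NormedSpace ℝ E]
    {H : Type*} [TopologicalSpace H] (I : ModelWithCorners ℝ E H) [I.Boundaryless]
    (M : Type*) [TopologicalSpace M] [ChartedSpace H M]
    [CompactSpace M]
    (f : M → ℝ)
    (hf : ContMDiff I 𝓘(ℝ) (⊤ : ℕ∞) f)
    (hcrit : ∀ x, mfderiv I 𝓘(ℝ) f x = 0 → f x = 0 ∨ f x = 1)
    (hmin : IsConnected (f ⁻¹' {0})) :
    ∀ a ∈ Set.Ioo (0 : ℝ) 1, IsConnected {y : M | f y ≤ a} := by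
  rintro a ⟨ha0, ha1⟩
  have : LocallyConnectedSpace H := I.toHomeomorph.locallyConnectedSpace
  have : LocallyConnectedSpace M := ChartedSpace.locallyConnectedSpace H M
  have hlocmin (x) (hx : IsLocalMin f x) : f x = 0 ∨ f x = 1 := hcrit x hx.mfderiv_eq_zero
  have hzero_sub : f ⁻¹' {0} ⊆ {y | f y < a} := fun y (hy : f y = 0) ↦
    show f y < a from hy ▸ ha0
  have hconn_lt : IsPreconnected {y | f y < a} := by
    refine isPreconnected_of_forall_connectedComponentIn_meets hmin.isPreconnected hzero_sub
      hmin.nonempty fun y hy ↦ ?_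
    obtain ⟨x, hxC, hx⟩ := exists_isLocalMin_mem_connectedComponentIn_setOf_lt hf.continuous hy
    have hxa : f x < a := connectedComponentIn_subset {z | f z < a} y hxC
    exact ⟨x, hxC, (hlocmin x hx).resolve_right (by linarith)⟩
  refine ⟨hmin.nonempty.mono (hzero_sub.trans fun y (hy : f y < a) ↦ hy.le),
    hconn_lt.subset_closure (fun y (hy : f y < a) ↦ hy.le) (setOf_le_subset_closure_setOf_lt ?_)⟩
  intro x hxa hx
  rcases hlocmin x hx with h | h <;> linarith

/-- For a Reeb function `f` on a smooth closed manifold whose set of minima `f⁻¹(0)` is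
nonempty and connected, every sublevel set `{f ≤ a}` with `a ∈ (0,1)` is connected. -/
theorem stmt_7
    {E : Type*} [NormedAddCommGroup E] [NormedSpace ℝ E] [FiniteDimensional ℝ E]
    {H : Type*} [TopologicalSpace H] (I : ModelWithCorners ℝ E H) [I.Boundaryless]
    (M : Type*) [TopologicalSpace M] [ChartedSpace H M] [IsManifold I (⊤ : ℕ∞) M]
    [T2Space M] [CompactSpace M]
    (f : M → ℝ)
    (hf : ContMDiff I 𝓘(ℝ) (⊤ : ℕ∞) f)
    (hrange : ∀ x, f x ∈ Set.Icc (0 : ℝ) 1)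
    (hcrit : ∀ x, mfderiv I 𝓘(ℝ) f x = 0 → f x = 0 ∨ f x = 1)
    (hmin : IsConnected (f ⁻¹' {0})) :
    ∀ a ∈ Set.Ioo (0 : ℝ) 1, IsConnected {y : M | f y ≤ a} :=
  stmt_7_general I M f hf hcrit hmin
end
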